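/- In a compressed digital trie over a fixed finite alphabet, if T ⊆ S is a subset of strings and (v,w) is an edge of the compressed trie D(T), then the corresponding path P in the compressed trie D(S) has the property that every internal node of P has at least one descendant string in S − T, and the sets of strings of S − T descending from distinct internal nodes of P (off the path) are pairwise disjoint. -/
import Mathlib


open scoped Classical

/-- `p` is a node of the (uncompressed) trie of the string set `S`:
`p` is a prefix of some string of `S`. -/
def IsTrieNode {A : Type*} (S : Finset (List A)) (p : List A) : Prop :=
  ∃ s ∈ S, p <+: s

/-- `p` is a branching node of the compressed trie of `S`: either `p ∈ S`, or `p` has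
at least two distinct children that are trie nodes of `S`. -/
def IsBranching {A : Type*} (S : Finset (List A)) (p : List A) : Prop :=
  p ∈ S ∨ ∃ x y : A, x ≠ y ∧ IsTrieNode S (p ++ [x]) ∧ IsTrieNode S (p ++ [y])

private lemma prefix_antisymm' {A : Type*} {a b s : List A} (ha : a <+: s) (hb : b <+: s)
    (h : a.length = b.length) : a = b :=
  List.IsPrefix.eq_of_length (List.prefix_of_prefix_length_le ha hb h.le) h

/-- key: if `p, p'` are prefixes of `w` with `p.length < p'.length` and `p' <+: s`,
then the on-path child `w.take (p.length+1)` is a prefix of `s`. -/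
private lemma aux_take {A : Type*} {p p' w s : List A} (hpw : p <+: w) (hp'w : p' <+: w)
    (hlt : p.length < p'.length) (hp's : p' <+: s) : w.take (p.length + 1) <+: s := by
  have h1 : w.take (p.length + 1) <+: p' := by
    refine List.prefix_of_prefix_length_le (List.take_prefix _ _) hp'w ?_
    simpa [List.length_take] using by omega
  exact h1.trans hp's

/-- In a compressed trie over a fixed finite alphabet: let `S` be a prefix-free finite
set of strings, `T ⊆ S`, and let `(v, w)` be an edge of the compressed trie `D(T)`
(both endpoints branching in `T`, with no branching node of `T` strictly between).
Then every internal node `p` of the corresponding path in `D(S)` (a branching node of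
`S` strictly between `v` and `w`) has at least one descendant string in `S − T` off
the path, and these off-path descendant sets are pairwise disjoint for distinct
internal nodes. -/
theorem stmt10 {A : Type*} [Fintype A] [DecidableEq A]
    (S T : Finset (List A)) (hTS : T ⊆ S)
    (hpf : ∀ s ∈ S, ∀ t ∈ S, s <+: t → s = t)
    (v w : List A) (hvw : v <+: w) (hne : v ≠ w)
    (hv : IsBranching T v) (hw : IsBranching T w)
    (hedge : ∀ p : List A, v <+: p → p <+: w → p ≠ v → p ≠ w → ¬ IsBranching T p) :
    (∀ p : List A, v <+: p → p <+: w → p ≠ v → p ≠ w → IsBranching S p →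
        ((S \ T).filter
            (fun s => p <+: s ∧ ¬ (w.take (p.length + 1) <+: s))).Nonempty)
    ∧ ∀ p p' : List A,
        (v <+: p ∧ p <+: w ∧ p ≠ v ∧ p ≠ w ∧ IsBranching S p) →
        (v <+: p' ∧ p' <+: w ∧ p' ≠ v ∧ p' ≠ w ∧ IsBranching S p') → p ≠ p' →
        Disjoint
          ((S \ T).filter (fun s => p <+: s ∧ ¬ (w.take (p.length + 1) <+: s)))
          ((S \ T).filter (fun s => p' <+: s ∧ ¬ (w.take (p'.length + 1) <+: s))) := by
  -- w is a prefix of some string in T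
  obtain ⟨t0, ht0T, hwt0⟩ : ∃ t ∈ T, w <+: t := by
    rcases hw with hwT | ⟨x, y, _, ⟨t, htT, ht⟩, _⟩
    · exact ⟨w, hwT, List.prefix_refl _⟩
    · exact ⟨t, htT, ((List.prefix_append w [x]).trans ht)⟩
  constructor
  · intro p hvp hpw hpv hpne hbr
    have hnotT : ¬ IsBranching T p := hedge p hvp hpw hpv hpne
    have hlen : p.length < w.length := by
      rcases Nat.lt_or_ge p.length w.length with h | h
      · exact h
      · exact absurd (prefix_antisymm' hpw (List.prefix_refl w)
          (le_antisymm hpw.length_le h)) hpne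
    -- w.take (p.length+1) = p ++ [c]
    obtain ⟨c, hc⟩ : ∃ c, w.take (p.length + 1) = p ++ [c] := by
      refine ⟨w[p.length]'hlen, ?_⟩
      rw [List.take_succ, List.getElem?_eq_getElem hlen]
      have hp : w.take p.length = p := (List.prefix_iff_eq_take.mp hpw).symm
      simp [hp]
    have hcw : p ++ [c] <+: w := hc ▸ List.take_prefix _ _
    -- helper: a child x ≠ c that is a trie node of S gives the witness
    have main : ∀ x : A, x ≠ c → IsTrieNode S (p ++ [x]) →
        ((S \ T).filter
          (fun s => p <+: s ∧ ¬ (w.take (p.length + 1) <+: s))).Nonempty := by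
      intro x hxc ⟨s, hsS, hxs⟩
      have hsT : s ∉ T := by
        intro hsT
        exact hnotT (Or.inr ⟨x, c, hxc, ⟨s, hsT, hxs⟩, ⟨t0, ht0T, hcw.trans hwt0⟩⟩)
      refine ⟨s, ?_⟩
      rw [Finset.mem_filter, Finset.mem_sdiff]
      refine ⟨⟨hsS, hsT⟩, (List.prefix_append p [x]).trans hxs, ?_⟩
      intro hcs
      rw [hc] at hcs
      have := prefix_antisymm' hxs hcs (by simp)
      simp at this
      exact hxc this
    rcases hbr with hpS | ⟨x, y, hxy, hx, hy⟩
    · -- p itself is in S, and p ∉ T since p not branching in T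
      have hpT : p ∉ T := fun h => hnotT (Or.inl h)
      refine ⟨p, ?_⟩
      rw [Finset.mem_filter, Finset.mem_sdiff]
      refine ⟨⟨hpS, hpT⟩, List.prefix_refl _, ?_⟩
      intro h
      have := h.length_le
      rw [hc] at this
      simp at this
    · by_cases hx' : x = c
      · exact main y (fun h => hxy (hx' ▸ h ▸ rfl)) hy
      · exact main x hx' hx
  · rintro p p' ⟨_, hpw, _, hpne, _⟩ ⟨_, hp'w, _, hp'ne, _⟩ hpp'
    rw [Finset.disjoint_left]
    intro s hs hs'
    rw [Finset.mem_filter] at hs hs'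
    obtain ⟨_, hps, hnc⟩ := hs
    obtain ⟨_, hp's, hnc'⟩ := hs'
    have hll : p.length ≠ p'.length := by
      intro h
      exact hpp' (prefix_antisymm' hpw hp'w h)
    rcases Nat.lt_or_ge p.length p'.length with h | h
    · exact hnc (aux_take hpw hp'w h hp's)
    · exact hnc' (aux_take hp'w hpw (Nat.lt_of_le_of_ne h hll.symm) hps)
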